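/- Let σ ∈ S_n with i, i+1 ∈ Des(σ). Then the unordered pairs {w, w′} of reduced words of σ that differ by a single braid move, where w ends in the letter i and w′ ends in the letter i+1, are exactly the pairs {a·(i, i+1, i), a·(i+1, i, i+1)} obtained by appending these triples to a word a ∈ R(σ·s_i·s_{i+1}·s_i); in particular, the number of braid edges of G(σ) joining a word ending in i to a word ending in i+1 equals |R(σ·s_i·s_{i+1}·s_i)|. Moreover, if i ∈ Des(σ) but neither i−1 nor i+1 lies in Des(σ), then every braid move applied to a reduced word of σ ending in i produces a reduced word again ending in i. -/
import Mathlib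


namespace RW

/-- The simple transposition `s i = (i, i+1)`, acting on `ℕ` (points are `1, …, n`;
the point `0` is unused, matching the paper's 1-indexed conventions). -/
def s (i : ℕ) : Equiv.Perm ℕ := Equiv.swap i (i + 1)

/-- The product `s i₁ * s i₂ * ⋯ * s iₗ` of the word `w = [i₁, …, iₗ]`. -/
def π (w : List ℕ) : Equiv.Perm ℕ := (w.map s).prod

/-- The copy of the symmetric group `S_n` inside `Equiv.Perm ℕ`: permutations of
`{1, …, n}`, i.e. fixing `0` and every point `> n`. -/
def Sn (n : ℕ) : Set (Equiv.Perm ℕ) := {σ | ∀ m : ℕ, (m = 0 ∨ n < m) → σ m = m}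

/-- The length `ℓ(σ)`: the number of inversions of `σ`. -/
noncomputable def len (σ : Equiv.Perm ℕ) : ℕ :=
  Nat.card {p : ℕ × ℕ // p.1 < p.2 ∧ σ p.2 < σ p.1}

/-- `w` is a reduced word for `σ`: its product is `σ` and its length is `ℓ(σ)`. -/
def Reduced (σ : Equiv.Perm ℕ) (w : List ℕ) : Prop :=
  π w = σ ∧ w.length = len σ

/-- `R σ`: the set of reduced words of `σ`. -/
def R (σ : Equiv.Perm ℕ) : Set (List ℕ) := {w | Reduced σ w}

/-- The descent set `Des σ = {i ≥ 1 | σ(i) > σ(i+1)}`. -/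
def Des (σ : Equiv.Perm ℕ) : Set ℕ := {i | 1 ≤ i ∧ σ (i + 1) < σ i}

/-- A single commutation move: swap two adjacent letters `a, b` with `|a - b| > 1`. -/
def CommMove (w w' : List ℕ) : Prop :=
  ∃ u v : List ℕ, ∃ a b : ℕ, 1 < ((a : ℤ) - (b : ℤ)).natAbs ∧
    w = u ++ a :: b :: v ∧ w' = u ++ b :: a :: v

/-- A single braid move: replace consecutive letters `(a, a+1, a)` by `(a+1, a, a+1)`
or vice versa. -/
def BraidMove (w w' : List ℕ) : Prop :=
  ∃ u v : List ℕ, ∃ a : ℕ,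
    (w = u ++ a :: (a+1) :: a :: v ∧ w' = u ++ (a+1) :: a :: (a+1) :: v) ∨
    (w = u ++ (a+1) :: a :: (a+1) :: v ∧ w' = u ++ a :: (a+1) :: a :: v)

/-- The braid degree of a word: the number of words obtainable from it by a single
braid move.  (For `w ∈ R σ` these are exactly the braid-edge neighbours of `w` in
`G(σ)`, since a braid move sends reduced words of `σ` to reduced words of `σ`.) -/
noncomputable def dB (w : List ℕ) : ℕ := Nat.card {w' : List ℕ // BraidMove w w'}

/-- The commutation degree of a word: the number of words obtainable from it by a
single commutation move. -/
noncomputable def dC (w : List ℕ) : ℕ := Nat.card {w' : List ℕ // CommMove w w'}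

/-- The number `|B(σ)|` of braid classes: classes of `R σ` under the equivalence
generated by single braid moves. -/
noncomputable def nB (σ : Equiv.Perm ℕ) : ℕ :=
  Nat.card (Quot (fun w w' : R σ => BraidMove w.1 w'.1))

/-- The number `|C(σ)|` of commutation classes. -/
noncomputable def nC (σ : Equiv.Perm ℕ) : ℕ :=
  Nat.card (Quot (fun w w' : R σ => CommMove w.1 w'.1))

/-- The underlying function of `w₀^{(k,i)}`: reverse the interval `{i, …, i+k-1}`. -/
def w0fun (k i : ℕ) : ℕ → ℕ := fun m => if i ≤ m ∧ m < i + k then i + (i + k - 1) - m else m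

theorem w0fun_involutive (k i : ℕ) : Function.Involutive (w0fun k i) := by
  intro m
  unfold w0fun
  split_ifs <;> omega

/-- `w₀^{(k,i)}`: the permutation fixing every point outside `{i, …, i+k-1}` and
reversing that interval. -/
def w0 (k i : ℕ) : Equiv.Perm ℕ := (w0fun_involutive k i).toPerm

/-- Right weak order: `τ ≤ σ` iff `ℓ(τ) + ℓ(τ⁻¹σ) = ℓ(σ)`. -/
def wle (τ σ : Equiv.Perm ℕ) : Prop := len τ + len (τ⁻¹ * σ) = len σ

/-- The support of `σ`: the letters appearing in some reduced word of `σ`. -/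
def supp (σ : Equiv.Perm ℕ) : Set ℕ := {a | ∃ w, Reduced σ w ∧ a ∈ w}

-- auxiliary
def Invs (σ : Equiv.Perm ℕ) : Set (ℕ × ℕ) := {p | p.1 < p.2 ∧ σ p.2 < σ p.1}

lemma len_eq_ncard (σ : Equiv.Perm ℕ) : len σ = (Invs σ).ncard :=
  (Nat.card_coe_set_eq _).symm

lemma s_mul_self (a : ℕ) : s a * s a = 1 := Equiv.swap_mul_self _ _

lemma s_apply (a m : ℕ) : s a m = if m = a then a + 1 else if m = a + 1 then a else m := by
  simp [s, Equiv.swap_apply_def]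

lemma s_lt {a p q : ℕ} (h : p < q) (hne : ¬(p = a ∧ q = a + 1)) : s a p < s a q := by
  rw [s_apply, s_apply]
  split_ifs <;> omega

lemma s_s (a m : ℕ) : s a (s a m) = m := Equiv.swap_apply_self _ _ _

lemma s_left (a : ℕ) : s a a = a + 1 := by
  rw [s_apply, if_pos rfl]

lemma s_right (a : ℕ) : s a (a + 1) = a := by
  rw [s_apply, if_neg (by omega), if_pos rfl]

lemma invs_diff_eq (σ : Equiv.Perm ℕ) (a : ℕ) :
    Invs (σ * s a) \ {(a, a + 1)} =
      (fun p : ℕ × ℕ => (s a p.1, s a p.2)) '' (Invs σ \ {(a, a + 1)}) := by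
  ext ⟨p, q⟩
  constructor
  · rintro ⟨⟨h1, h2⟩, h3⟩
    have h3' : ¬(p = a ∧ q = a + 1) := by
      rintro ⟨hp, hq⟩; exact h3 (by simp [hp, hq])
    have h2' : σ (s a q) < σ (s a p) := h2
    refine ⟨(s a p, s a q), ⟨⟨s_lt h1 h3', h2'⟩, ?_⟩, ?_⟩
    · intro hc
      have hc' : s a p = a ∧ s a q = a + 1 := by simpa [Prod.ext_iff] using hc
      have hp : p = a + 1 := by
        have := congrArg (s a) hc'.1; rwa [s_s, s_left] at this
      have hq : q = a := by
        have := congrArg (s a) hc'.2; rwa [s_s, s_right] at this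
      omega
    · simp [s_s]
  · rintro ⟨⟨x, y⟩, ⟨⟨h1, h2⟩, h3⟩, hxy⟩
    have h3' : ¬(x = a ∧ y = a + 1) := by
      rintro ⟨hp, hq⟩; exact h3 (by simp [hp, hq])
    have hp : p = s a x := by
      have := congrArg Prod.fst hxy; exact this.symm
    have hq : q = s a y := by
      have := congrArg Prod.snd hxy; exact this.symm
    subst hp hq
    refine ⟨⟨s_lt h1 h3', ?_⟩, ?_⟩
    · show σ (s a (s a y)) < σ (s a (s a x))
      rwa [s_s, s_s]
    · intro hc
      have hc' : s a x = a ∧ s a y = a + 1 := by simpa [Prod.ext_iff] using hc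
      have hx : x = a + 1 := by
        have := congrArg (s a) hc'.1; rwa [s_s, s_left] at this
      have hy : y = a := by
        have := congrArg (s a) hc'.2; rwa [s_s, s_right] at this
      omega

lemma s_pair_inj (a : ℕ) : Function.Injective (fun p : ℕ × ℕ => (s a p.1, s a p.2)) := by
  intro ⟨p, q⟩ ⟨p', q'⟩ h
  simp only [Prod.mk.injEq] at h
  have h1 := congrArg (s a) h.1
  have h2 := congrArg (s a) h.2
  simp [s_s] at h1 h2
  simp [h1, h2]

lemma fin_mul {σ : Equiv.Perm ℕ} (h : (Invs σ).Finite) (a : ℕ) : (Invs (σ * s a)).Finite := by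
  have : Invs (σ * s a) ⊆ insert (a, a+1) ((fun p : ℕ × ℕ => (s a p.1, s a p.2)) '' (Invs σ)) := by
    intro x hx
    by_cases hxe : x = (a, a+1)
    · simp [hxe]
    · have : x ∈ Invs (σ * s a) \ {(a, a+1)} := ⟨hx, hxe⟩
      rw [invs_diff_eq] at this
      obtain ⟨y, hy, hyx⟩ := this
      exact Set.mem_insert_iff.mpr (Or.inr ⟨y, hy.1, hyx⟩)
  exact Set.Finite.subset ((h.image _).insert _) this

lemma len_mul_of_lt {σ : Equiv.Perm ℕ} (h : (Invs σ).Finite) {a : ℕ}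
    (hlt : σ a < σ (a + 1)) : len (σ * s a) = len σ + 1 := by
  have hmem : (a, a+1) ∈ Invs (σ * s a) := by
    refine ⟨by simp, ?_⟩
    show σ (s a (a+1)) < σ (s a a)
    rw [s_left, s_right]
    exact hlt
  have hnmem : (a, a+1) ∉ Invs σ := fun hc => absurd (show σ (a+1) < σ a from hc.2) (by omega)
  have hfin' : (Invs (σ * s a)).Finite := fin_mul h a
  rw [len_eq_ncard, len_eq_ncard]
  rw [← Set.ncard_diff_singleton_add_one hmem hfin']
  rw [invs_diff_eq, Set.ncard_image_of_injective _ (s_pair_inj a),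
    Set.diff_singleton_eq_self hnmem]

lemma len_mul_of_gt {σ : Equiv.Perm ℕ} (h : (Invs σ).Finite) {a : ℕ}
    (hgt : σ (a + 1) < σ a) : len (σ * s a) + 1 = len σ := by
  have hfin' : (Invs (σ * s a)).Finite := fin_mul h a
  have hlt : (σ * s a) a < (σ * s a) (a + 1) := by
    show σ (s a a) < σ (s a (a+1))
    rw [s_left, s_right]
    exact hgt
  have := len_mul_of_lt hfin' hlt
  rw [mul_assoc, s_mul_self, mul_one] at this
  omega

lemma π_append (u v : List ℕ) : π (u ++ v) = π u * π v := by
  simp [π]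

lemma π_concat (u : List ℕ) (a : ℕ) : π (u ++ [a]) = π u * s a := by
  simp [π]

lemma len_le (w : List ℕ) : (Invs (π w)).Finite ∧ len (π w) ≤ w.length := by
  induction w using List.reverseRecOn with
  | nil =>
    constructor
    · convert Set.finite_empty
      ext ⟨p, q⟩
      simp only [Invs, Set.mem_setOf_eq, Set.mem_empty_iff_false, iff_false, not_and]
      intro h1
      simp [π]; omega
    · rw [len_eq_ncard]
      have : Invs (π ([] : List ℕ)) = ∅ := by
        ext ⟨p, q⟩
        simp only [Invs, Set.mem_setOf_eq, Set.mem_empty_iff_false, iff_false, not_and]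
        intro h1; simp [π]; omega
      simp [this]
  | append_singleton u a ih =>
    rw [π_concat]
    refine ⟨fin_mul ih.1 a, ?_⟩
    rcases lt_trichotomy (π u a) (π u (a+1)) with hc | hc | hc
    · rw [len_mul_of_lt ih.1 hc]; simpa using ih.2
    · exact absurd ((π u).injective hc) (by omega)
    · have := len_mul_of_gt ih.1 hc
      simp only [List.length_append, List.length_cons, List.length_nil]
      omega

lemma reduced_concat {τ : Equiv.Perm ℕ} {u : List ℕ} {a : ℕ} (hfin : (Invs τ).Finite)
    (h : Reduced τ (u ++ [a])) : Reduced (τ * s a) u ∧ τ (a + 1) < τ a := by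
  obtain ⟨hπ, hlen⟩ := h
  have hπu : π u = τ * s a := by
    rw [π_concat] at hπ
    rw [← hπ, mul_assoc, s_mul_self, mul_one]
  have hle : len (π u) ≤ u.length := (len_le u).2
  simp only [List.length_append, List.length_cons, List.length_nil] at hlen
  rw [hπu] at hle
  rcases lt_trichotomy (τ a) (τ (a+1)) with hc | hc | hc
  · have := len_mul_of_lt hfin hc
    omega
  · exact absurd (τ.injective hc) (by omega)
  · have := len_mul_of_gt hfin hc
    exact ⟨⟨hπu, by omega⟩, hc⟩

lemma concat_reduced {τ : Equiv.Perm ℕ} {u : List ℕ} {a : ℕ} (hfin : (Invs τ).Finite)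
    (h : Reduced (τ * s a) u) (hd : τ (a + 1) < τ a) : Reduced τ (u ++ [a]) := by
  obtain ⟨hπ, hlen⟩ := h
  constructor
  · rw [π_concat, hπ, mul_assoc, s_mul_self, mul_one]
  · have := len_mul_of_gt hfin hd
    simp only [List.length_append, List.length_cons, List.length_nil]
    omega

set_option maxHeartbeats 1000000 in
lemma braid_rel (i : ℕ) : s i * s (i + 1) * s i = s (i + 1) * s i * s (i + 1) := by
  ext x
  simp only [Equiv.Perm.mul_apply, s_apply]
  split_ifs <;> omega

lemma fin_of_Sn {n : ℕ} {σ : Equiv.Perm ℕ} (h : σ ∈ Sn n) : (Invs σ).Finite := by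
  have hbig : ∀ m, n < m → σ m = m := fun m hm => h m (Or.inr hm)
  have h0 : σ 0 = 0 := h 0 (Or.inl rfl)
  have hsmall : ∀ m, m ≤ n → σ m ≤ n := by
    intro m hm
    by_contra hc
    push_neg at hc
    have := hbig (σ m) hc
    have := σ.injective this
    omega
  apply Set.Finite.subset ((Set.finite_Iic n).prod (Set.finite_Iic n))
  rintro ⟨p, q⟩ ⟨h1, h2⟩
  simp only [Set.mem_prod, Set.mem_Iic]
  have hq : q ≤ n := by
    by_contra hc
    push_neg at hc
    have hqq : σ q = q := hbig q hc
    rcases Nat.eq_zero_or_pos p with hp0 | hp1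
    · subst hp0; rw [h0] at h2; omega
    · by_cases hpn : n < p
      · rw [hbig p hpn, hqq] at h2; simp only at h1 h2; omega
      · push_neg at hpn
        have := hsmall p hpn
        rw [hqq] at h2; simp only at h1 h2; omega
  simp only at h1
  exact ⟨by omega, hq⟩

lemma s_other {a m : ℕ} (h1 : m ≠ a) (h2 : m ≠ a + 1) : s a m = m := by
  rw [s_apply, if_neg h1, if_neg h2]

lemma eval1 (σ : Equiv.Perm ℕ) (b x y : ℕ) (h : s b x = y) : (σ * s b) x = σ y := by
  simp only [Equiv.Perm.mul_apply, h]

lemma eval2 (σ : Equiv.Perm ℕ) (b c x y : ℕ) (h : s b (s c x) = y) :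
    (σ * s b * s c) x = σ y := by
  simp only [Equiv.Perm.mul_apply, h]

lemma getLast?_append_cons (u : List ℕ) (a : ℕ) (v : List ℕ) :
    (u ++ a :: v).getLast? = (a :: v).getLast? := by
  rw [List.getLast?_append]
  obtain ⟨x, hx⟩ := Option.isSome_iff_exists.mp
    (List.getLast?_isSome.mpr (by simp) : (a :: v).getLast?.isSome)
  rw [hx]; rfl

lemma peel3 {σ : Equiv.Perm ℕ} (hf : (Invs σ).Finite) {u : List ℕ} {x y z : ℕ}
    (h : Reduced σ (u ++ [x, y, z])) :
    Reduced (σ * s z * s y * s x) u ∧ σ (z + 1) < σ z ∧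
      (σ * s z) (y + 1) < (σ * s z) y ∧
      (σ * s z * s y) (x + 1) < (σ * s z * s y) x := by
  have e : u ++ [x, y, z] = ((u ++ [x]) ++ [y]) ++ [z] := by simp
  rw [e] at h
  obtain ⟨h1, d1⟩ := reduced_concat hf h
  obtain ⟨h2, d2⟩ := reduced_concat (fin_mul hf z) h1
  obtain ⟨h3, d3⟩ := reduced_concat (fin_mul (fin_mul hf z) y) h2
  exact ⟨h3, d1, d2, d3⟩

lemma unpeel3 {σ : Equiv.Perm ℕ} (hf : (Invs σ).Finite) {u : List ℕ} {x y z : ℕ}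
    (h : Reduced (σ * s z * s y * s x) u) (d1 : σ (z + 1) < σ z)
    (d2 : (σ * s z) (y + 1) < (σ * s z) y)
    (d3 : (σ * s z * s y) (x + 1) < (σ * s z * s y) x) :
    Reduced σ (u ++ [x, y, z]) := by
  have h2 := concat_reduced (fin_mul (fin_mul hf z) y) h d3
  have h1 := concat_reduced (fin_mul hf z) h2 d2
  have h0 := concat_reduced hf h1 d1
  have e : u ++ [x, y, z] = ((u ++ [x]) ++ [y]) ++ [z] := by simp
  rw [e]
  exact h0

lemma braid_grp (σ : Equiv.Perm ℕ) (i : ℕ) :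
    σ * s (i + 1) * s i * s (i + 1) = σ * s i * s (i + 1) * s i := by
  have hpt := Equiv.ext_iff.mp (braid_rel i)
  ext x
  simp only [Equiv.Perm.mul_apply]
  have h1 := hpt x
  simp only [Equiv.Perm.mul_apply] at h1
  rw [← h1]

/-- For `σ ∈ S_n` with `i, i+1 ∈ Des σ`, the unordered pairs of reduced
words of `σ` differing by a single braid move, one ending in `i` and the other in
`i+1`, are exactly the pairs `(a·(i,i+1,i), a·(i+1,i,i+1))` with
`a ∈ R(σ s_i s_{i+1} s_i)`; in particular the number of such braid edges of `G(σ)`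
is `|R(σ s_i s_{i+1} s_i)|`.  Moreover if `i ∈ Des σ` but neither `i-1` nor `i+1`
is a descent, every braid move applied to a reduced word of `σ` ending in `i`
produces a word again ending in `i`. -/
theorem statement_2 (n : ℕ) (σ : Equiv.Perm ℕ) (hσ : σ ∈ Sn n) (i : ℕ) (hi : i ∈ Des σ) :
    (i + 1 ∈ Des σ →
      ({p : List ℕ × List ℕ | p.1 ∈ R σ ∧ p.2 ∈ R σ ∧ BraidMove p.1 p.2 ∧
          p.1.getLast? = some i ∧ p.2.getLast? = some (i + 1)}
        = (fun a => (a ++ [i, i + 1, i], a ++ [i + 1, i, i + 1])) ''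
            R (σ * s i * s (i + 1) * s i)) ∧
      Nat.card {p : List ℕ × List ℕ | p.1 ∈ R σ ∧ p.2 ∈ R σ ∧ BraidMove p.1 p.2 ∧
          p.1.getLast? = some i ∧ p.2.getLast? = some (i + 1)}
        = Nat.card (R (σ * s i * s (i + 1) * s i))) ∧
    (i - 1 ∉ Des σ → i + 1 ∉ Des σ →
      ∀ w ∈ R σ, w.getLast? = some i → ∀ w' : List ℕ, BraidMove w w' →
        w'.getLast? = some i) := by
  obtain ⟨hi1, hd1⟩ := hi
  have hfσ : (Invs σ).Finite := fin_of_Sn hσ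
  refine ⟨?_, ?_⟩
  · intro hi'
    obtain ⟨-, hd2⟩ := hi'
    have hset : ({p : List ℕ × List ℕ | p.1 ∈ R σ ∧ p.2 ∈ R σ ∧ BraidMove p.1 p.2 ∧
          p.1.getLast? = some i ∧ p.2.getLast? = some (i + 1)}
        = (fun a => (a ++ [i, i + 1, i], a ++ [i + 1, i, i + 1])) ''
            R (σ * s i * s (i + 1) * s i)) := by
      ext ⟨w, w'⟩
      simp only [Set.mem_setOf_eq, Set.mem_image]
      constructor
      · rintro ⟨hw, hw', hbm, hl1, hl2⟩
        obtain ⟨u, v, a, hcase⟩ := hbm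
        rcases hcase with ⟨e1, e2⟩ | ⟨e1, e2⟩
        · cases v with
          | cons y ys =>
            exfalso
            rw [e1, show u ++ a :: (a+1) :: a :: y :: ys = (u ++ [a, a+1, a]) ++ y :: ys by simp,
              getLast?_append_cons] at hl1
            rw [e2, show u ++ (a+1) :: a :: (a+1) :: y :: ys = (u ++ [a+1, a, a+1]) ++ y :: ys by simp,
              getLast?_append_cons] at hl2
            rw [hl1] at hl2
            simp at hl2
          | nil =>
            have ha : a = i := by
              rw [e1, getLast?_append_cons] at hl1
              exact Option.some.inj hl1
            subst ha
            refine ⟨u, (peel3 hfσ (show Reduced σ (u ++ [a, a+1, a]) from by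
              rw [e1] at hw; exact hw)).1, ?_⟩
            rw [e1, e2]
        · cases v with
          | cons y ys =>
            exfalso
            rw [e1, show u ++ (a+1) :: a :: (a+1) :: y :: ys = (u ++ [a+1, a, a+1]) ++ y :: ys by simp,
              getLast?_append_cons] at hl1
            rw [e2, show u ++ a :: (a+1) :: a :: y :: ys = (u ++ [a, a+1, a]) ++ y :: ys by simp,
              getLast?_append_cons] at hl2
            rw [hl1] at hl2
            simp at hl2
          | nil =>
            exfalso
            have h1 : a + 1 = i := by
              rw [e1, getLast?_append_cons] at hl1
              exact Option.some.inj hl1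
            have h2 : a = i + 1 := by
              rw [e2, getLast?_append_cons] at hl2
              exact Option.some.inj hl2
            omega
      · rintro ⟨u, hu, heq⟩
        simp only [Prod.mk.injEq] at heq
        obtain ⟨rfl, rfl⟩ := heq
        have hu1 : Reduced σ (u ++ [i, i + 1, i]) := by
          refine unpeel3 hfσ hu hd1 ?_ ?_
          · rw [eval1 σ i (i+1+1) (i+2) (by simp only [s_apply]; split_ifs <;> omega),
              eval1 σ i (i+1) i (by simp only [s_apply]; split_ifs <;> omega)]
            exact hd2.trans hd1
          · rw [eval2 σ i (i+1) (i+1) (i+1+1) (by simp only [s_apply]; split_ifs <;> omega),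
              eval2 σ i (i+1) i (i+1) (by simp only [s_apply]; split_ifs <;> omega)]
            exact hd2
        have hu2 : Reduced σ (u ++ [i + 1, i, i + 1]) := by
          have hu' : Reduced (σ * s (i+1) * s i * s (i+1)) u := by
            rw [braid_grp]; exact hu
          refine unpeel3 hfσ hu' hd2 ?_ ?_
          · rw [eval1 σ (i+1) (i+1) (i+1+1) (by simp only [s_apply]; split_ifs <;> omega),
              eval1 σ (i+1) i i (by simp only [s_apply]; split_ifs <;> omega)]
            exact hd2.trans hd1
          · rw [eval2 σ (i+1) i (i+1+1) (i+1) (by simp only [s_apply]; split_ifs <;> omega),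
              eval2 σ (i+1) i (i+1) i (by simp only [s_apply]; split_ifs <;> omega)]
            exact hd1
        refine ⟨hu1, hu2, ⟨u, [], i, Or.inl ⟨rfl, rfl⟩⟩, ?_, ?_⟩
        · rw [getLast?_append_cons]; rfl
        · rw [getLast?_append_cons]; rfl
    refine ⟨hset, ?_⟩
    have hinj : Function.Injective
        (fun a : List ℕ => (a ++ [i, i + 1, i], a ++ [i + 1, i, i + 1])) := by
      intro a b h
      simpa using congrArg Prod.fst h
    rw [Nat.card_coe_set_eq, Nat.card_coe_set_eq, hset,
      Set.ncard_image_of_injective _ hinj]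
  · intro hm1 hm2 w hw hlast w' hbm
    obtain ⟨u, v, a, hcase⟩ := hbm
    rcases hcase with ⟨e1, e2⟩ | ⟨e1, e2⟩
    · cases v with
      | cons y ys =>
        rw [e2, show u ++ (a+1) :: a :: (a+1) :: y :: ys = (u ++ [a+1, a, a+1]) ++ y :: ys by simp,
          getLast?_append_cons]
        rw [e1, show u ++ a :: (a+1) :: a :: y :: ys = (u ++ [a, a+1, a]) ++ y :: ys by simp,
          getLast?_append_cons] at hlast
        exact hlast
      | nil =>
        exfalso
        have ha : a = i := by
          rw [e1, getLast?_append_cons] at hlast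
          exact Option.some.inj hlast
        subst ha
        have hred : Reduced σ (u ++ [a, a+1, a]) := by rw [e1] at hw; exact hw
        have d3 := (peel3 hfσ hred).2.2.2
        rw [eval2 σ a (a+1) (a+1) (a+1+1) (by simp only [s_apply]; split_ifs <;> omega),
          eval2 σ a (a+1) a (a+1) (by simp only [s_apply]; split_ifs <;> omega)] at d3
        exact hm2 ⟨by omega, d3⟩
    · cases v with
      | cons y ys =>
        rw [e2, show u ++ a :: (a+1) :: a :: y :: ys = (u ++ [a, a+1, a]) ++ y :: ys by simp,
          getLast?_append_cons]
        rw [e1, show u ++ (a+1) :: a :: (a+1) :: y :: ys = (u ++ [a+1, a, a+1]) ++ y :: ys by simp,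
          getLast?_append_cons] at hlast
        exact hlast
      | nil =>
        exfalso
        have ha : a + 1 = i := by
          rw [e1, getLast?_append_cons] at hlast
          exact Option.some.inj hlast
        have hred : Reduced σ (u ++ [a+1, a, a+1]) := by rw [e1] at hw; exact hw
        have d3 := (peel3 hfσ hred).2.2.2
        rw [eval2 σ (a+1) a (a+1+1) (a+1) (by simp only [s_apply]; split_ifs <;> omega),
          eval2 σ (a+1) a (a+1) a (by simp only [s_apply]; split_ifs <;> omega)] at d3
        rcases Nat.eq_zero_or_pos a with h0 | h1
        · subst h0
          rw [hσ 0 (Or.inl rfl)] at d3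
          omega
        · refine hm1 ?_
          have hia : i - 1 = a := by omega
          rw [hia]
          exact ⟨h1, d3⟩


end RW
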